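/- For α, β > 0, the function B̃(t,x) = 2√2 arctan((β/α) sin(α(x+δt))/cosh(β(x+γt))), with δ = α²−3β², γ = 3α²−β², and B = ∂_x B̃, satisfies the identity ∂_x² B + ∂_t B̃ + B³ = 0 for all (t,x). -/

import Mathlib

/-!
With `θ = α(x + δt)` and `φ = β(x + γt)`, differentiating `B̃ = 2√2 arctan (β sin θ / (α cosh φ))`
gives `B = 2√2 αβ N / D` with `N = α cos θ cosh φ - β sin θ sinh φ` and
`D = α² cosh² φ + β² sin² θ`, and `∂ₜB̃` has the same shape. After multiplying by `D³ / (2√2 αβ)`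
the residual `∂ₓ²B + ∂ₜB̃ + B³` becomes the trigonometric polynomial
`6α²β² N D ((sin² θ + cos² θ) - (cosh² φ - sinh² φ))`, which vanishes.
-/

noncomputable def tildeB (α β t x : ℝ) : ℝ :=
  2 * Real.sqrt 2 *
    Real.arctan ((β / α) * Real.sin (α * (x + (α ^ 2 - 3 * β ^ 2) * t)) /
      Real.cosh (β * (x + (3 * α ^ 2 - β ^ 2) * t)))

noncomputable def breather (α β t x : ℝ) : ℝ := deriv (tildeB α β t) x

open Real

theorem deriv_deriv_div {f g f' g' : ℝ → ℝ} {f'' g'' x : ℝ}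
    (hf : ∀ y, HasDerivAt f (f' y) y) (hg : ∀ y, HasDerivAt g (g' y) y) (hg0 : ∀ y, g y ≠ 0)
    (hf' : HasDerivAt f' f'' x) (hg' : HasDerivAt g' g'' x) :
    deriv (deriv fun y => f y / g y) x =
      ((f'' * g x - f x * g'') * g x - 2 * (f' x * g x - f x * g' x) * g' x) / g x ^ 3 := by
  have hd : deriv (fun y => f y / g y) = fun y => (f' y * g y - f y * g' y) / g y ^ 2 :=
    funext fun y => ((hf y).div (hg y) (hg0 y)).deriv
  rw [hd]
  refine ((((hf'.mul (hg x)).sub ((hf x).mul hg')).div ((hg x).pow 2)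
    (pow_ne_zero 2 (hg0 x))).deriv).trans ?_
  have := hg0 x
  simp only [Pi.mul_apply, Pi.sub_apply, Pi.pow_apply, Nat.cast_ofNat, Nat.add_one_sub_one, pow_one]
  field_simp
  ring

namespace Breather

variable (α β : ℝ)

noncomputable def carrierPhase (t x : ℝ) : ℝ := α * (x + (α ^ 2 - 3 * β ^ 2) * t)

noncomputable def envelopePhase (t x : ℝ) : ℝ := β * (x + (3 * α ^ 2 - β ^ 2) * t)

theorem hasDerivAt_carrierPhase_x (t x : ℝ) : HasDerivAt (carrierPhase α β t) α x := by
  unfold carrierPhase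
  simpa using ((hasDerivAt_id x).add_const _).const_mul α

theorem hasDerivAt_envelopePhase_x (t x : ℝ) : HasDerivAt (envelopePhase α β t) β x := by
  unfold envelopePhase
  simpa using ((hasDerivAt_id x).add_const _).const_mul β

theorem hasDerivAt_carrierPhase_t (t x : ℝ) :
    HasDerivAt (carrierPhase α β · x) (α * (α ^ 2 - 3 * β ^ 2)) t := by
  unfold carrierPhase
  simpa using (((hasDerivAt_id t).const_mul (α ^ 2 - 3 * β ^ 2)).const_add x).const_mul α

theorem hasDerivAt_envelopePhase_t (t x : ℝ) :
    HasDerivAt (envelopePhase α β · x) (β * (3 * α ^ 2 - β ^ 2)) t := by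
  unfold envelopePhase
  simpa using (((hasDerivAt_id t).const_mul (3 * α ^ 2 - β ^ 2)).const_add x).const_mul β

/-- `B = 2√2 αβ · num / den`, `∂ₜB̃ = 2√2 αβ · numT / den`; primes are derivatives along a curve
`(θ, φ)` of velocity `(α, β)`, i.e. in `x`. -/
noncomputable def num (θ φ : ℝ) : ℝ := α * cos θ * cosh φ - β * sin θ * sinh φ

noncomputable def den (θ φ : ℝ) : ℝ := α ^ 2 * cosh φ ^ 2 + β ^ 2 * sin θ ^ 2

noncomputable def num' (θ φ : ℝ) : ℝ := -(α ^ 2 + β ^ 2) * sin θ * cosh φ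

noncomputable def den' (θ φ : ℝ) : ℝ := 2 * α * β * (α * cosh φ * sinh φ + β * sin θ * cos θ)

noncomputable def num'' (θ φ : ℝ) : ℝ :=
  -(α ^ 2 + β ^ 2) * (α * cos θ * cosh φ + β * sin θ * sinh φ)

noncomputable def den'' (θ φ : ℝ) : ℝ :=
  2 * α ^ 2 * β ^ 2 * (sinh φ ^ 2 + cosh φ ^ 2 + cos θ ^ 2 - sin θ ^ 2)

noncomputable def numT (θ φ : ℝ) : ℝ :=
  α * (α ^ 2 - 3 * β ^ 2) * cos θ * cosh φ - β * (3 * α ^ 2 - β ^ 2) * sin θ * sinh φ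

variable {α} in
theorem den_pos (hα : α ≠ 0) (θ φ : ℝ) : 0 < den α β θ φ := by
  have : 1 ≤ cosh φ ^ 2 := one_le_pow₀ (one_le_cosh φ)
  unfold den
  nlinarith [sq_pos_of_ne_zero hα, sq_nonneg (β * sin θ)]

variable {α β} {θ φ : ℝ → ℝ} {y : ℝ}

theorem hasDerivAt_arctan_sin_div_cosh {θ' φ' : ℝ} (hα : α ≠ 0)
    (hθ : HasDerivAt θ θ' y) (hφ : HasDerivAt φ φ' y) :
    HasDerivAt (fun y => arctan (β / α * sin (θ y) / cosh (φ y)))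
      (α * β * (θ' * cos (θ y) * cosh (φ y) - φ' * sin (θ y) * sinh (φ y)) /
        den α β (θ y) (φ y)) y := by
  refine (((hθ.sin.const_mul (β / α)).div hφ.cosh (cosh_pos _).ne').arctan).congr_deriv ?_
  have := (den_pos β hα (θ y) (φ y)).ne'
  unfold den at this ⊢
  simp only [Pi.div_apply]
  field_simp

theorem hasDerivAt_num (hθ : HasDerivAt θ α y) (hφ : HasDerivAt φ β y) :
    HasDerivAt (fun y => num α β (θ y) (φ y)) (num' α β (θ y) (φ y)) y := by
  refine (((hθ.cos.const_mul α).mul hφ.cosh).sub ((hθ.sin.const_mul β).mul hφ.sinh)).congr_deriv ?_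
  unfold num'
  ring

theorem hasDerivAt_den (hθ : HasDerivAt θ α y) (hφ : HasDerivAt φ β y) :
    HasDerivAt (fun y => den α β (θ y) (φ y)) (den' α β (θ y) (φ y)) y := by
  refine ((hφ.cosh.pow 2).const_mul _ |>.add ((hθ.sin.pow 2).const_mul _)).congr_deriv ?_
  unfold den'
  ring

theorem hasDerivAt_num' (hθ : HasDerivAt θ α y) (hφ : HasDerivAt φ β y) :
    HasDerivAt (fun y => num' α β (θ y) (φ y)) (num'' α β (θ y) (φ y)) y := by
  refine ((hθ.sin.const_mul _).mul hφ.cosh).congr_deriv ?_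
  unfold num''
  ring

theorem hasDerivAt_den' (hθ : HasDerivAt θ α y) (hφ : HasDerivAt φ β y) :
    HasDerivAt (fun y => den' α β (θ y) (φ y)) (den'' α β (θ y) (φ y)) y := by
  refine ((((hφ.cosh.const_mul α).mul hφ.sinh).add
    ((hθ.sin.const_mul β).mul hθ.cos)).const_mul _).congr_deriv ?_
  unfold den''
  ring

variable (α β)

theorem hasDerivAt_tildeB_x (hα : α ≠ 0) (t x : ℝ) :
    HasDerivAt (tildeB α β t)
      (2 * √2 * α * β * num α β (carrierPhase α β t x) (envelopePhase α β t x) /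
        den α β (carrierPhase α β t x) (envelopePhase α β t x)) x := by
  refine ((hasDerivAt_arctan_sin_div_cosh hα (hasDerivAt_carrierPhase_x α β t x)
    (hasDerivAt_envelopePhase_x α β t x)).const_mul (2 * √2)).congr_deriv ?_
  unfold num
  ring

theorem hasDerivAt_tildeB_t (hα : α ≠ 0) (t x : ℝ) :
    HasDerivAt (tildeB α β · x)
      (2 * √2 * α * β * numT α β (carrierPhase α β t x) (envelopePhase α β t x) /
        den α β (carrierPhase α β t x) (envelopePhase α β t x)) t := by
  refine ((hasDerivAt_arctan_sin_div_cosh hα (hasDerivAt_carrierPhase_t α β t x)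
    (hasDerivAt_envelopePhase_t α β t x)).const_mul (2 * √2)).congr_deriv ?_
  unfold numT
  ring

theorem mkdv_residual_eq_zero {K : ℝ} (hK : K ^ 2 = 8 * α ^ 2 * β ^ 2) (hα : α ≠ 0) (θ φ : ℝ) :
    ((K * num'' α β θ φ * den α β θ φ - K * num α β θ φ * den'' α β θ φ) * den α β θ φ
        - 2 * (K * num' α β θ φ * den α β θ φ - K * num α β θ φ * den' α β θ φ)
          * den' α β θ φ) / den α β θ φ ^ 3
      + K * numT α β θ φ / den α β θ φ + (K * num α β θ φ / den α β θ φ) ^ 3 = 0 := by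
  have hD := (den_pos β hα θ φ).ne'
  have key : (num'' α β θ φ * den α β θ φ - num α β θ φ * den'' α β θ φ) * den α β θ φ
      - 2 * (num' α β θ φ * den α β θ φ - num α β θ φ * den' α β θ φ) * den' α β θ φ
      + numT α β θ φ * den α β θ φ ^ 2 + 8 * α ^ 2 * β ^ 2 * num α β θ φ ^ 3 = 0 := by
    unfold num num' num'' den den' den'' numT
    linear_combination 6 * α ^ 2 * β ^ 2 * (α * cos θ * cosh φ - β * sin θ * sinh φ)
      * (α ^ 2 * cosh φ ^ 2 + β ^ 2 * sin θ ^ 2) * (sin_sq_add_cos_sq θ - cosh_sq_sub_sinh_sq φ)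
  field_simp
  linear_combination K * key + K * num α β θ φ ^ 3 * hK

end Breather

open Breather in
theorem breather_integrated_mkdv_general (α β : ℝ) (hα : 0 < α) (t x : ℝ) :
    deriv (deriv (breather α β t)) x
      + deriv (fun t' : ℝ => tildeB α β t' x) t
      + (breather α β t x) ^ 3 = 0 := by
  have hα0 : α ≠ 0 := hα.ne'
  have hθ := hasDerivAt_carrierPhase_x α β t
  have hφ := hasDerivAt_envelopePhase_x α β t
  have hB : breather α β t = fun y => 2 * √2 * α * β * num α β (carrierPhase α β t y)
      (envelopePhase α β t y) / den α β (carrierPhase α β t y) (envelopePhase α β t y) :=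
    funext fun y => (hasDerivAt_tildeB_x α β hα0 t y).deriv
  rw [hB, deriv_deriv_div (fun y => (hasDerivAt_num (hθ y) (hφ y)).const_mul _)
    (fun y => hasDerivAt_den (hθ y) (hφ y)) (fun y => (den_pos β hα0 _ _).ne')
    ((hasDerivAt_num' (hθ x) (hφ x)).const_mul _) (hasDerivAt_den' (hθ x) (hφ x)),
    (hasDerivAt_tildeB_t α β hα0 t x).deriv]
  exact mkdv_residual_eq_zero α β (by rw [mul_pow, mul_pow, mul_pow, sq_sqrt zero_le_two]; ring)
    hα0 _ _

theorem breather_integrated_mkdv (α β : ℝ) (hα : 0 < α) (hβ : 0 < β) (t x : ℝ) :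
    deriv (deriv (breather α β t)) x
      + deriv (fun t' : ℝ => tildeB α β t' x) t
      + (breather α β t x) ^ 3 = 0 :=
  breather_integrated_mkdv_general α β hα t x
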